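/- arXiv:math/0511664 — 3 statements merged into one kernel-verified Lean document; each statement's English description precedes it below -/
import Mathlib

section
/- Let W be an n-dimensional vector space over a field, E_• a complete flag on W, V an r-dimensional subspace with Schubert position I ⊆ {1,…,n}, and let p : W → W/V be the quotient map. Write the complement {1,…,n} ∖ I = {α(1) < ⋯ < α(n−r)}. Then the subspaces E_b(W/V) := p(E_{α(b)}) for b = 1,…,n−r, together with E_0(W/V) = {0}, form a complete flag on W/V; that is, dim p(E_{α(b)}) = b for every b = 0,1,…,n−r. -/
open Module

lemma finrank_map_mkQ_add {K : Type*} [Field K] {W : Type*} [AddCommGroup W]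
    [Module K W] [FiniteDimensional K W] (V S : Submodule K W) :
    finrank K ↥(S.map V.mkQ) + finrank K ↥(V ⊓ S) = finrank K S := by
  have h := LinearMap.finrank_range_add_finrank_ker (V.mkQ.comp S.subtype)
  have hrange : LinearMap.range (V.mkQ.comp S.subtype) = S.map V.mkQ := by
    rw [LinearMap.range_comp, Submodule.range_subtype]
  have hker : LinearMap.ker (V.mkQ.comp S.subtype) = Submodule.comap S.subtype (V ⊓ S) := by
    rw [LinearMap.ker_comp, Submodule.ker_mkQ, Submodule.comap_inf,
      Submodule.comap_subtype_self, inf_top_eq]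
  rw [hrange, hker] at h
  rw [← h, (Submodule.comapSubtypeEquivOfLe (inf_le_right : V ⊓ S ≤ S)).finrank_eq]

/-- If `V` is an `r`-dimensional subspace of the `n`-dimensional space `W` with Schubert
position `I` relative to a complete flag `E_•`, `p : W → W/V` is the quotient map, and
`α(1) < ⋯ < α(n−r)` enumerates `{1,…,n} ∖ I`, then the subspaces
`E_b(W/V) := p(E_{α(b)})`, together with `E_0(W/V) = {0}`, form a complete flag on `W/V`:
`dim p(E_{α(b)}) = b` for every `b = 0,…,n−r`. -/
theorem induced_flag_on_quotient (K : Type*) [Field K] (W : Type*) [AddCommGroup W]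
    [Module K W] [FiniteDimensional K W] (n r : ℕ) (hrn : r ≤ n) (hW : finrank K W = n)
    (E : ℕ → Submodule K W) (hEmono : Monotone E) (hEdim : ∀ u ≤ n, finrank K (E u) = u)
    (hEtop : E n = ⊤) (V : Submodule K W) (hV : finrank K V = r)
    (i : ℕ → ℕ) (hi : StrictMonoOn i (Set.Icc 1 r))
    (hirange : ∀ a ∈ Set.Icc 1 r, i a ∈ Set.Icc 1 n)
    (hpos : ∀ u ≤ n, finrank K ↥(V ⊓ E u) =
      ((Finset.Icc 1 r).filter (fun a => i a ≤ u)).card)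
    (α : ℕ → ℕ) (hα : StrictMonoOn α (Set.Icc 1 (n - r)))
    (hαrange : ∀ b ∈ Set.Icc 1 (n - r), α b ∈ Set.Icc 1 n)
    (hcompl : ∀ u ∈ Set.Icc 1 n,
      (∃ b ∈ Set.Icc 1 (n - r), α b = u) ↔ ¬ ∃ a ∈ Set.Icc 1 r, i a = u) :
    finrank K ↥((E 0).map V.mkQ) = 0 ∧
      ∀ b ∈ Finset.Icc 1 (n - r), finrank K ↥((E (α b)).map V.mkQ) = b := by
  constructor
  · have h0 : E 0 = ⊥ := Submodule.finrank_eq_zero.mp (hEdim 0 (Nat.zero_le n))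
    rw [h0, Submodule.map_bot, finrank_bot]
  · intro b hb
    rw [Finset.mem_Icc] at hb
    obtain ⟨hb1, hb2⟩ := hb
    set u := α b with hu
    have huIcc : u ∈ Set.Icc 1 n := hαrange b ⟨hb1, hb2⟩
    obtain ⟨hu1, hun⟩ := huIcc
    -- counting: u = b + card of i's below u
    have hcount : u = b + ((Finset.Icc 1 r).filter (fun a => i a ≤ u)).card := by
      have hA : (Finset.Icc 1 (n - r)).filter (fun b' => α b' ≤ u) = Finset.Icc 1 b := by
        ext b'
        simp only [Finset.mem_filter, Finset.mem_Icc]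
        constructor
        · rintro ⟨⟨h1, h2⟩, h3⟩
          exact ⟨h1, (hα.le_iff_le ⟨h1, h2⟩ ⟨hb1, hb2⟩).mp h3⟩
        · rintro ⟨h1, h2⟩
          exact ⟨⟨h1, le_trans h2 hb2⟩,
            (hα.le_iff_le ⟨h1, le_trans h2 hb2⟩ ⟨hb1, hb2⟩).mpr h2⟩
      have hunion : Finset.Icc 1 u =
          ((Finset.Icc 1 (n - r)).filter (fun b' => α b' ≤ u)).image α ∪
          ((Finset.Icc 1 r).filter (fun a => i a ≤ u)).image i := by
        ext v
        simp only [Finset.mem_union, Finset.mem_image, Finset.mem_filter, Finset.mem_Icc]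
        constructor
        · rintro ⟨hv1, hv2⟩
          have hvn : v ∈ Set.Icc 1 n := ⟨hv1, le_trans hv2 hun⟩
          by_cases h : ∃ a ∈ Set.Icc 1 r, i a = v
          · obtain ⟨a, ⟨ha1, ha2⟩, ha3⟩ := h
            exact Or.inr ⟨a, ⟨⟨ha1, ha2⟩, ha3 ▸ hv2⟩, ha3⟩
          · obtain ⟨b', ⟨h1, h2⟩, h3⟩ := (hcompl v hvn).mpr h
            exact Or.inl ⟨b', ⟨⟨h1, h2⟩, h3 ▸ hv2⟩, h3⟩
        · rintro (⟨b', ⟨⟨h1, h2⟩, h3⟩, h4⟩ | ⟨a, ⟨⟨h1, h2⟩, h3⟩, h4⟩)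
          · exact h4 ▸ ⟨(hαrange b' ⟨h1, h2⟩).1, h3⟩
          · exact h4 ▸ ⟨(hirange a ⟨h1, h2⟩).1, h3⟩
      have hdisj : Disjoint
          (((Finset.Icc 1 (n - r)).filter (fun b' => α b' ≤ u)).image α)
          (((Finset.Icc 1 r).filter (fun a => i a ≤ u)).image i) := by
        rw [Finset.disjoint_left]
        rintro v hv hv'
        simp only [Finset.mem_image, Finset.mem_filter, Finset.mem_Icc] at hv hv'
        obtain ⟨b', ⟨⟨h1, h2⟩, _⟩, h3⟩ := hv
        obtain ⟨a, ⟨⟨h1', h2'⟩, _⟩, h3'⟩ := hv'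
        have hvn : v ∈ Set.Icc 1 n := h3 ▸ hαrange b' ⟨h1, h2⟩
        exact (hcompl v hvn).mp ⟨b', ⟨h1, h2⟩, h3⟩ ⟨a, ⟨h1', h2'⟩, h3'⟩
      have hcard := congrArg Finset.card hunion
      rw [Finset.card_union_of_disjoint hdisj, Nat.card_Icc] at hcard
      rw [Finset.card_image_of_injOn (fun x hx y hy => by
            simp only [Finset.coe_filter, Set.mem_setOf_eq, Finset.mem_Icc] at hx hy
            exact hα.injOn ⟨hx.1.1, hx.1.2⟩ ⟨hy.1.1, hy.1.2⟩),
          Finset.card_image_of_injOn (fun x hx y hy => by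
            simp only [Finset.coe_filter, Set.mem_setOf_eq, Finset.mem_Icc] at hx hy
            exact hi.injOn ⟨hx.1.1, hx.1.2⟩ ⟨hy.1.1, hy.1.2⟩),
          hA, Nat.card_Icc] at hcard
      omega
    have hrank := finrank_map_mkQ_add V (E u)
    rw [hEdim u hun, hpos u hun] at hrank
    omega
end

section
/- Let W be an n-dimensional vector space over a field and E_• ∈ Fl(W) a complete flag. Suppose S ⊆ V ⊆ W are subspaces with dim V = r and dim S = d. Let I = {i_1 < ⋯ < i_r} ⊆ {1,…,n} be the unique subset such that V ∈ Ω°_I(E_•) ⊆ Gr(r,W), and let K ⊆ {1,…,r} be the unique subset of cardinality d such that S ∈ Ω°_K(E_•(V)) ⊆ Gr(d,V), where E_•(V) is the induced flag on V. Set L = {i_a : a ∈ K}. Then S ∈ Ω°_L(E_•) ⊆ Gr(d,W). -/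
open Module

/-- Let `S ⊆ V ⊆ W` with `dim W = n`, `dim V = r`, `dim S = d`, and `E_•` a complete
flag on `W`.  If `V` has Schubert position `I = {i_1 < ⋯ < i_r}` relative to `E_•`, and
`S` has Schubert position `K = {k_1 < ⋯ < k_d} ⊆ {1,…,r}` relative to the induced flag
`E_•(V)` (with `E_a(V) = E_{i_a} ⊓ V`), then `S` has Schubert position
`L = {i_a : a ∈ K}` relative to `E_•`, i.e. `S ∈ Ω°_L(E_•) ⊆ Gr(d,W)`. -/
theorem schubert_position_of_subsubspace (K : Type*) [Field K] (W : Type*) [AddCommGroup W]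
    [Module K W] [FiniteDimensional K W] (n r d : ℕ) (hW : finrank K W = n)
    (E : ℕ → Submodule K W) (hEmono : Monotone E) (hEdim : ∀ u ≤ n, finrank K (E u) = u)
    (hEtop : E n = ⊤) (S V : Submodule K W) (hSV : S ≤ V)
    (hV : finrank K V = r) (hS : finrank K S = d)
    (i : ℕ → ℕ) (hi : StrictMonoOn i (Set.Icc 1 r))
    (hirange : ∀ a ∈ Set.Icc 1 r, i a ∈ Set.Icc 1 n)
    (hVpos : ∀ u ≤ n, finrank K ↥(V ⊓ E u) =
      ((Finset.Icc 1 r).filter (fun a => i a ≤ u)).card)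
    (k : ℕ → ℕ) (hk : StrictMonoOn k (Set.Icc 1 d))
    (hkrange : ∀ c ∈ Set.Icc 1 d, k c ∈ Set.Icc 1 r)
    (hSpos : ∀ b ∈ Set.Icc 1 r, finrank K ↥(S ⊓ (E (i b) ⊓ V)) =
      ((Finset.Icc 1 d).filter (fun c => k c ≤ b)).card) :
    ∀ u ≤ n, finrank K ↥(S ⊓ E u) =
      ((Finset.Icc 1 d).filter (fun c => i (k c) ≤ u)).card := by

  intro u hu
  classical
  set T := (Finset.Icc 1 r).filter (fun a => i a ≤ u) with hT
  set b := T.card with hb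
  have hTsubIcc : T ⊆ Finset.Icc 1 r := Finset.filter_subset _ _
  -- T is downward closed
  have hdc : ∀ a ∈ T, ∀ a', 1 ≤ a' → a' ≤ a → a' ∈ T := by
    intro a ha a' h1 h2
    simp only [hT, Finset.mem_filter, Finset.mem_Icc] at ha ⊢
    refine ⟨⟨h1, le_trans h2 ha.1.2⟩, le_trans ?_ ha.2⟩
    exact hi.monotoneOn ⟨h1, le_trans h2 ha.1.2⟩ ⟨ha.1.1, ha.1.2⟩ h2
  have hTeq : T = Finset.Icc 1 b := by
    rcases T.eq_empty_or_nonempty with h | h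
    · rw [h]
      have : b = 0 := by rw [hb, h]; simp
      rw [this]; simp
    · set m := T.max' h with hm
      have hmT : m ∈ T := T.max'_mem h
      have hTm : T = Finset.Icc 1 m := by
        apply Finset.Subset.antisymm
        · intro x hx
          have h1 : 1 ≤ x := (Finset.mem_Icc.mp (hTsubIcc hx)).1
          exact Finset.mem_Icc.mpr ⟨h1, T.le_max' x hx⟩
        · intro x hx
          rw [Finset.mem_Icc] at hx
          exact hdc m hmT x hx.1 hx.2
      have hbm : b = m := by rw [hb, hTm, Nat.card_Icc]; omega
      rw [hTm, hbm]
  have hbr : b ≤ r := by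
    have := Finset.card_le_card hTsubIcc
    simpa [Nat.card_Icc] using this
  have hVu : finrank K ↥(V ⊓ E u) = b := hVpos u hu
  rcases Nat.eq_zero_or_pos b with hb0 | hb1
  · -- b = 0 case
    have hVbot : V ⊓ E u = ⊥ := by
      rw [← Submodule.finrank_eq_zero (R := K)]; omega
    have hSbot : S ⊓ E u = ⊥ := by
      rw [← le_bot_iff, ← hVbot]
      exact inf_le_inf_right _ hSV
    rw [hSbot]
    have hfe : (Finset.Icc 1 d).filter (fun c => i (k c) ≤ u) = ∅ := by
      rw [Finset.filter_eq_empty_iff]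
      intro c hc hcle
      have hkc := hkrange c (by simpa [Set.mem_Icc] using Finset.mem_Icc.mp hc)
      have : k c ∈ T := by
        simp only [hT, Finset.mem_filter, Finset.mem_Icc]
        exact ⟨⟨hkc.1, hkc.2⟩, hcle⟩
      rw [hTeq, hb0] at this
      simp at this
    rw [hfe]
    simp
  · -- b ≥ 1 case
    have hbT : b ∈ T := by rw [hTeq]; exact Finset.mem_Icc.mpr ⟨hb1, le_refl b⟩
    have hibu : i b ≤ u := (Finset.mem_filter.mp hbT).2
    have hibn : i b ∈ Set.Icc 1 n := hirange b ⟨hb1, hbr⟩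
    have hVib : finrank K ↥(V ⊓ E (i b)) = b := by
      rw [hVpos (i b) hibn.2]
      have : (Finset.Icc 1 r).filter (fun a => i a ≤ i b) = Finset.Icc 1 b := by
        ext a
        simp only [Finset.mem_filter, Finset.mem_Icc]
        constructor
        · rintro ⟨⟨h1, h2⟩, h3⟩
          exact ⟨h1, (hi.le_iff_le ⟨h1, h2⟩ ⟨hb1, hbr⟩).mp h3⟩
        · rintro ⟨h1, h2⟩
          have h2r : a ≤ r := le_trans h2 hbr
          exact ⟨⟨h1, h2r⟩, (hi.le_iff_le ⟨h1, h2r⟩ ⟨hb1, hbr⟩).mpr h2⟩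
      rw [this, Nat.card_Icc]; omega
    have hVeq : V ⊓ E (i b) = V ⊓ E u := by
      apply Submodule.eq_of_le_of_finrank_eq
      · exact inf_le_inf_left V (hEmono hibu)
      · rw [hVib, hVu]
    have hSeq : S ⊓ E u = S ⊓ (E (i b) ⊓ V) := by
      have h1 : S ⊓ E u = S ⊓ (V ⊓ E u) := by
        rw [← inf_assoc, inf_eq_left.mpr hSV]
      rw [h1, ← hVeq, inf_comm V (E (i b))]
    rw [hSeq, hSpos b ⟨hb1, hbr⟩]
    congr 1
    apply Finset.filter_congr
    intro c hc
    have hkc := hkrange c (by simpa [Set.mem_Icc] using Finset.mem_Icc.mp hc)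
    have hiff : i (k c) ≤ u ↔ k c ∈ T := by
      simp only [hT, Finset.mem_filter, Finset.mem_Icc]
      constructor
      · intro h; exact ⟨⟨hkc.1, hkc.2⟩, h⟩
      · intro h; exact h.2
    rw [hTeq] at hiff
    simp only [Finset.mem_Icc] at hiff
    simp only [eq_iff_iff, hiff]
    have h1 := hkc.1
    omega
end

section
/- Let V be an r-dimensional subspace of an n-dimensional vector space W over a field, and let ℰ = (E^1_•, …, E^s_•) be an s-tuple of complete flags on W. Let I^1,…,I^s ⊆ {1,…,n} be the Schubert positions of V with respect to E^1_•,…,E^s_• (each of cardinality r, write I^j = {i^j_1 < ⋯ < i^j_r}). Let S ⊆ V be a d-dimensional subspace, and let K^1,…,K^s ⊆ {1,…,r} be the Schubert positions of S with respect to the induced flags E^1_•(V),…,E^s_•(V) on V. Then dim(S, V, ℰ(V)) − dim(S, W, ℰ) = Σ_{j=1}^s Σ_{a ∈ K^j} (n − r + a − i^j_a) − d(n − r). -/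
open Module

/-- Let `V` be an `r`-dimensional subspace of the `n`-dimensional space `W`,
`ℰ = (E^1_•,…,E^s_•)` an `s`-tuple of complete flags on `W`, and `S ⊆ V` a
`d`-dimensional subspace.  Let `I^j = {i^j_1 < ⋯ < i^j_r}` be the Schubert positions of
`V` in `W`, `K^j = {k^j_1 < ⋯ < k^j_d}` the Schubert positions of `S` relative to the
induced flags `E^j_•(V)` on `V`, and `L^j = {l^j_1 < ⋯ < l^j_d}` the Schubert positions
of `S` in `W`.  Then, with `dim(S,V,ℰ(V)) = d(r−d) − Σ_j Σ_b (r−d+b−k^j_b)` and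
`dim(S,W,ℰ) = d(n−d) − Σ_j Σ_b (n−d+b−l^j_b)` the expected dimensions,
`dim(S,V,ℰ(V)) − dim(S,W,ℰ) = Σ_j Σ_{a ∈ K^j} (n−r+a−i^j_a) − d(n−r)`. -/
theorem expected_dimension_difference (K : Type*) [Field K] (W : Type*) [AddCommGroup W]
    [Module K W] [FiniteDimensional K W] (s n r d : ℕ) (hW : finrank K W = n)
    (E : Fin s → ℕ → Submodule K W) (hEmono : ∀ j, Monotone (E j))
    (hEdim : ∀ j, ∀ u ≤ n, finrank K (E j u) = u) (hEtop : ∀ j, E j n = ⊤)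
    (S V : Submodule K W) (hSV : S ≤ V) (hV : finrank K V = r) (hS : finrank K S = d)
    (i : Fin s → ℕ → ℕ) (hi : ∀ j, StrictMonoOn (i j) (Set.Icc 1 r))
    (hirange : ∀ j, ∀ a ∈ Set.Icc 1 r, i j a ∈ Set.Icc 1 n)
    (hVpos : ∀ j, ∀ u ≤ n, finrank K ↥(V ⊓ E j u) =
      ((Finset.Icc 1 r).filter (fun a => i j a ≤ u)).card)
    (k : Fin s → ℕ → ℕ) (hk : ∀ j, StrictMonoOn (k j) (Set.Icc 1 d))
    (hkrange : ∀ j, ∀ c ∈ Set.Icc 1 d, k j c ∈ Set.Icc 1 r)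
    (hSposV : ∀ j, ∀ b ∈ Set.Icc 1 r, finrank K ↥(S ⊓ (E j (i j b) ⊓ V)) =
      ((Finset.Icc 1 d).filter (fun c => k j c ≤ b)).card)
    (l : Fin s → ℕ → ℕ) (hl : ∀ j, StrictMonoOn (l j) (Set.Icc 1 d))
    (hlrange : ∀ j, ∀ c ∈ Set.Icc 1 d, l j c ∈ Set.Icc 1 n)
    (hSposW : ∀ j, ∀ u ≤ n, finrank K ↥(S ⊓ E j u) =
      ((Finset.Icc 1 d).filter (fun c => l j c ≤ u)).card) :
    ((d : ℤ) * ((r : ℤ) - (d : ℤ)) -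
        ∑ j : Fin s, ∑ b ∈ Finset.Icc 1 d, ((r : ℤ) - (d : ℤ) + (b : ℤ) - (k j b : ℤ))) -
      ((d : ℤ) * ((n : ℤ) - (d : ℤ)) -
        ∑ j : Fin s, ∑ b ∈ Finset.Icc 1 d, ((n : ℤ) - (d : ℤ) + (b : ℤ) - (l j b : ℤ))) =
    (∑ j : Fin s, ∑ b ∈ Finset.Icc 1 d,
        ((n : ℤ) - (r : ℤ) + (k j b : ℤ) - (i j (k j b) : ℤ))) -
      (d : ℤ) * ((n : ℤ) - (r : ℤ)) := by
  -- Key fact: the Schubert position of `S` in `W` is `l j c = i j (k j c)`.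
  have hli : ∀ (j : Fin s), ∀ c ∈ Finset.Icc 1 d, l j c = i j (k j c) := by
    intro j c hc
    rw [Finset.mem_Icc] at hc
    obtain ⟨hc1, hcd⟩ := hc
    have hcset : c ∈ Set.Icc 1 d := ⟨hc1, hcd⟩
    have hkc : k j c ∈ Set.Icc 1 r := hkrange j c hcset
    set b := k j c with hb
    set t := i j b with ht
    have htn : t ∈ Set.Icc 1 n := hirange j b hkc
    obtain ⟨ht1, ht2⟩ := htn
    obtain ⟨hbk1, hbk2⟩ := hkc
    have hkc : b ∈ Set.Icc 1 r := ⟨hbk1, hbk2⟩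
    have hSE : ∀ u, S ⊓ E j u = S ⊓ (E j u ⊓ V) := by
      intro u
      rw [inf_comm (E j u) V, ← inf_assoc, inf_eq_left.mpr hSV]
    -- filter for k at level b is Icc 1 c
    have hfilter_k : (Finset.Icc 1 d).filter (fun c' => k j c' ≤ b) = Finset.Icc 1 c := by
      ext c'
      simp only [Finset.mem_filter, Finset.mem_Icc]
      constructor
      · rintro ⟨⟨h1, h2⟩, hke⟩
        exact ⟨h1, ((hk j).le_iff_le ⟨h1, h2⟩ hcset).mp hke⟩
      · rintro ⟨h1, h2⟩
        have h2d : c' ≤ d := h2.trans hcd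
        exact ⟨⟨h1, h2d⟩, ((hk j).le_iff_le ⟨h1, h2d⟩ hcset).mpr h2⟩
    -- count of l's at level t equals c
    have hht : ((Finset.Icc 1 d).filter (fun c' => l j c' ≤ t)).card = c := by
      have e1 := hSposW j t ht2
      have e2 := hSposV j b hkc
      rw [hSE t] at e1
      rw [← e1, e2, hfilter_k, Nat.card_Icc]
      omega
    -- count of l's at level t-1 equals c-1
    have hht1 : ((Finset.Icc 1 d).filter (fun c' => l j c' ≤ t - 1)).card = c - 1 := by
      have ht1n : t - 1 ≤ n := by omega
      have e1 := hSposW j (t - 1) ht1n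
      rw [hSE (t - 1)] at e1
      rcases Nat.lt_or_ge b 2 with hb1 | hb2
      · -- b = k j c = 1, hence c = 1
        have hb1' : b = 1 := by omega
        have hc1' : c = 1 := by
          by_contra hne
          have h2c : 2 ≤ c := by omega
          have : k j 1 < k j c := (hk j) ⟨le_refl 1, by omega⟩ hcset (by omega)
          have := (hkrange j 1 ⟨le_refl 1, by omega⟩).1
          omega
        -- V ⊓ E j (t-1) = ⊥
        have hV0 : finrank K ↥(V ⊓ E j (t - 1)) = 0 := by
          rw [hVpos j (t - 1) ht1n]
          rw [Finset.card_eq_zero, Finset.filter_eq_empty_iff]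
          intro a ha
          rw [Finset.mem_Icc] at ha
          have h1a : i j 1 ≤ i j a := ((hi j).le_iff_le ⟨le_refl 1, by omega⟩
            ⟨ha.1, ha.2⟩).mpr ha.1
          have hit : i j 1 = t := by rw [ht, hb1']
          omega
        have hbot : V ⊓ E j (t - 1) = ⊥ := by
          rwa [Submodule.finrank_eq_zero] at hV0
        have hS0 : finrank K ↥(S ⊓ (E j (t - 1) ⊓ V)) = 0 := by
          have hle : S ⊓ (E j (t - 1) ⊓ V) ≤ ⊥ := by
            rw [← hbot]
            exact le_trans inf_le_right (by rw [inf_comm])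
          rw [le_bot_iff.mp hle]
          simp
        rw [hS0] at e1
        omega
      · -- b ≥ 2
        set b' := b - 1 with hb'
        have hb'r : b' ∈ Set.Icc 1 r := ⟨by omega, by omega⟩
        have hlt : i j b' < t := (hi j) hb'r hkc (by omega)
        -- V ⊓ E j (i j b') = V ⊓ E j (t - 1)
        have hVeq : V ⊓ E j (i j b') = V ⊓ E j (t - 1) := by
          apply Submodule.eq_of_le_of_finrank_le
          · exact inf_le_inf_left V (hEmono j (by omega))
          · rw [hVpos j (t - 1) ht1n, hVpos j (i j b') (by omega)]
            apply Finset.card_le_card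
            intro a ha
            rw [Finset.mem_filter, Finset.mem_Icc] at ha ⊢
            refine ⟨ha.1, ?_⟩
            have hia : i j a < t := by omega
            have haset : a ∈ Set.Icc 1 r := ⟨ha.1.1, ha.1.2⟩
            have : a < b := ((hi j).lt_iff_lt haset hkc).mp hia
            exact ((hi j).le_iff_le haset hb'r).mpr (by omega)
        have hS1 : S ⊓ (E j (t - 1) ⊓ V) = S ⊓ (E j (i j b') ⊓ V) := by
          rw [inf_comm (E j (t-1)) V, inf_comm (E j (i j b')) V, hVeq]
        rw [hS1, hSposV j b' hb'r] at e1
        have hfk' : (Finset.Icc 1 d).filter (fun c' => k j c' ≤ b') = Finset.Icc 1 (c - 1) := by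
          ext c'
          simp only [Finset.mem_filter, Finset.mem_Icc]
          constructor
          · rintro ⟨⟨h1, h2⟩, hke⟩
            have : k j c' < b := by omega
            have := ((hk j).lt_iff_lt ⟨h1, h2⟩ hcset).mp this
            exact ⟨h1, by omega⟩
          · rintro ⟨h1, h2⟩
            have h2d : c' ≤ d := by omega
            have : c' < c := by omega
            have := (hk j).lt_iff_lt ⟨h1, h2d⟩ hcset |>.mpr this
            exact ⟨⟨h1, h2d⟩, by omega⟩
        rw [hfk', Nat.card_Icc] at e1
        omega
    -- l j c ≤ t
    have hle : l j c ≤ t := by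
      by_contra hgt
      push_neg at hgt
      have hsub : (Finset.Icc 1 d).filter (fun c' => l j c' ≤ t) ⊆ Finset.Icc 1 (c - 1) := by
        intro c' hc'
        simp only [Finset.mem_filter, Finset.mem_Icc] at hc' ⊢
        obtain ⟨⟨h1, h2⟩, hle'⟩ := hc'
        have : l j c' < l j c := lt_of_le_of_lt hle' hgt
        have := ((hl j).lt_iff_lt ⟨h1, h2⟩ hcset).mp this
        exact ⟨h1, by omega⟩
      have := Finset.card_le_card hsub
      rw [hht, Nat.card_Icc] at this
      omega
    -- t ≤ l j c
    have hge : t ≤ l j c := by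
      by_contra hlt
      push_neg at hlt
      have hsub : Finset.Icc 1 c ⊆ (Finset.Icc 1 d).filter (fun c' => l j c' ≤ t - 1) := by
        intro c' hc'
        rw [Finset.mem_Icc] at hc'
        have h2d : c' ≤ d := hc'.2.trans hcd
        rw [Finset.mem_filter, Finset.mem_Icc]
        have : l j c' ≤ l j c := ((hl j).le_iff_le ⟨hc'.1, h2d⟩ hcset).mpr hc'.2
        exact ⟨⟨hc'.1, h2d⟩, by omega⟩
      have := Finset.card_le_card hsub
      rw [hht1, Nat.card_Icc] at this
      omega
    omega
  -- Now the identity is pure algebra.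
  have H : ∑ j : Fin s, ∑ b ∈ Finset.Icc 1 d, ((n : ℤ) - (d : ℤ) + (b : ℤ) - (l j b : ℤ))
      = (∑ j : Fin s, ∑ b ∈ Finset.Icc 1 d,
          ((n : ℤ) - (r : ℤ) + (k j b : ℤ) - (i j (k j b) : ℤ)))
        + (∑ j : Fin s, ∑ b ∈ Finset.Icc 1 d,
          ((r : ℤ) - (d : ℤ) + (b : ℤ) - (k j b : ℤ))) := by
    rw [← Finset.sum_add_distrib]
    refine Finset.sum_congr rfl fun j _ => ?_
    rw [← Finset.sum_add_distrib]
    refine Finset.sum_congr rfl fun b hb => ?_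
    rw [hli j b hb]
    ring
  rw [H]
  ring
end
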